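/- Lemma 5.16: if Γ, a^p : •ⁿT ⊢ C[send a^p e] : •ᵐ(IO t) or Γ, a^p : •ⁿT ⊢ C[recv a^p] : •ᵐ(IO t) is derivable in the SID type system, where C is a process evaluation context, then n ≤ m. -/

import Mathlib

set_option autoImplicit false

namespace SID

/-! ## Pre-types and pre-session types as coinductive trees -/

inductive TyLabel : Type
  | unit | endl | inp | out | shared | prod | arrow | lolli | io | delay
  deriving DecidableEq

def TyLabel.arity : TyLabel → ℕ
  | .unit => 0
  | .endl => 0
  | .inp => 2
  | .out => 2
  | .shared => 1
  | .prod => 2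
  | .arrow => 2
  | .lolli => 2
  | .io => 1
  | .delay => 1

def TyF : PFunctor := ⟨TyLabel, fun l => Fin l.arity⟩

/-- Pre-types: possibly infinite coinductively generated trees over the type constructors. -/
abbrev PreTy : Type := TyF.M

namespace PreTy

def label (t : PreTy) : TyLabel := (PFunctor.M.dest t).1

def childN (t : PreTy) (n : ℕ) : PreTy :=
  if h : n < t.label.arity then (PFunctor.M.dest t).2 ⟨n, h⟩ else t

def tyUnit : PreTy := PFunctor.M.mk ⟨TyLabel.unit, Fin.elim0⟩
def tyEnd : PreTy := PFunctor.M.mk ⟨TyLabel.endl, Fin.elim0⟩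
def mk1 (l : TyLabel) (t : PreTy) : PreTy := PFunctor.M.mk ⟨l, fun _ => t⟩
def mk2 (l : TyLabel) (t s : PreTy) : PreTy :=
  PFunctor.M.mk ⟨l, fun i => if i.val = 0 then t else s⟩
def tyShared (T : PreTy) : PreTy := mk1 .shared T
def tyIO (t : PreTy) : PreTy := mk1 .io t
def tyDelay (t : PreTy) : PreTy := mk1 .delay t
def tyInp (t T : PreTy) : PreTy := mk2 .inp t T
def tyOut (t T : PreTy) : PreTy := mk2 .out t T
def tyProd (t s : PreTy) : PreTy := mk2 .prod t s
def tyArrow (t s : PreTy) : PreTy := mk2 .arrow t s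
def tyLolli (t s : PreTy) : PreTy := mk2 .lolli t s
def tyDelayN (n : ℕ) (t : PreTy) : PreTy := tyDelay^[n] t

/-- The type •∞, the unique solution of •∞ = • •∞. -/
def tyBulletInf : PreTy := PFunctor.M.corec (fun _ : Unit => ⟨TyLabel.delay, fun _ => ()⟩) ()

/-- `Lin` is the least predicate singling out linear types. -/
inductive Lin : PreTy → Prop
  | inp {t : PreTy} : t.label = .inp → Lin t
  | out {t : PreTy} : t.label = .out → Lin t
  | lolli {t : PreTy} : t.label = .lolli → Lin t
  | io {t : PreTy} : t.label = .io → Lin t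
  | prodL {t : PreTy} : t.label = .prod → Lin (t.childN 0) → Lin t
  | prodR {t : PreTy} : t.label = .prod → Lin (t.childN 1) → Lin t
  | delay {t : PreTy} : t.label = .delay → Lin (t.childN 0) → Lin t

def Un (t : PreTy) : Prop := ¬ Lin t

/-- `Subtree s t` : `s` is a subtree of the tree representation of `t`. -/
inductive Subtree : PreTy → PreTy → Prop
  | refl (t : PreTy) : Subtree t t
  | child {s t : PreTy} (n : ℕ) : n < t.label.arity → Subtree s (t.childN n) → Subtree s t

/-- Positions reachable from the root along session-continuation edges. -/
inductive SessPos : PreTy → PreTy → Prop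
  | refl (t : PreTy) : SessPos t t
  | cont {t s : PreTy} : SessPos t s → (s.label = .inp ∨ s.label = .out) → SessPos t (s.childN 1)
  | delay {t s : PreTy} : SessPos t s → s.label = .delay → SessPos t (s.childN 0)

/-- A pre-type generated by the grammar of pre-session types. -/
def IsSession (T : PreTy) : Prop :=
  ∀ s, SessPos T s →
    s.label = .endl ∨ s.label = .inp ∨ s.label = .out ∨ s.label = .delay

/-- Infinite paths in the tree representation of a pre-type. -/
def InfPath (t : PreTy) (p : ℕ → PreTy) : Prop :=
  p 0 = t ∧ ∀ n, ∃ k, k < (p n).label.arity ∧ p (n + 1) = (p n).childN k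

/-- A pre-type is a type (Definition 3.1). -/
def IsTy (t : PreTy) : Prop :=
  {s | Subtree s t}.Finite ∧
  (∀ p, InfPath t p → ∀ n, ∃ m, n ≤ m ∧ (p m).label = .delay) ∧
  (∀ s, Subtree s t → s.label = .arrow → Un (s.childN 1) → Un (s.childN 0)) ∧
  (∀ s, Subtree s t → s.label = .lolli → Lin (s.childN 1))

/-- A pre-session type is a session type. -/
def IsSTy (T : PreTy) : Prop := IsTy T ∧ IsSession T

/-- One step of the corecursive definition of duality. -/
def dualObj : PreTy ⊕ PreTy → TyF.Obj (PreTy ⊕ PreTy)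
  | .inr t => ⟨t.label, fun i => .inr (t.childN i.val)⟩
  | .inl t =>
    match t.label with
    | .inp => ⟨TyLabel.out, fun i => if i.val = 0 then .inr (t.childN 0) else .inl (t.childN 1)⟩
    | .out => ⟨TyLabel.inp, fun i => if i.val = 0 then .inr (t.childN 0) else .inl (t.childN 1)⟩
    | .delay => ⟨TyLabel.delay, fun _ => .inl (t.childN 0)⟩
    | l => ⟨l, fun i => .inr (t.childN i.val)⟩

/-- The dual of a session type, coinductively swapping ? and !. -/
def dualS (T : PreTy) : PreTy := PFunctor.M.corec dualObj (.inl T)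

end PreTy

/-! ## Expressions -/

inductive Pol : Type
  | pos | neg
  deriving DecidableEq

def Pol.dual : Pol → Pol
  | .pos => .neg
  | .neg => .pos

inductive Const : Type
  | unit | pair | copen | send | recv | future | ret | bind
  deriving DecidableEq

inductive Expr : Type
  | const : Const → Expr
  | var : String → Expr
  | chan : String → Expr
  | ep : String → Pol → Expr
  | lam : String → Expr → Expr
  | app : Expr → Expr → Expr
  | split : Expr → String → String → Expr → Expr
  deriving DecidableEq

namespace Expr

def retE (e : Expr) : Expr := .app (.const .ret) e
def pairE (e f : Expr) : Expr := .app (.app (.const .pair) e) f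
def bindE (e f : Expr) : Expr := .app (.app (.const .bind) e) f
def sendE (a : String) (p : Pol) (e : Expr) : Expr := .app (.app (.const .send) (.ep a p)) e
def recvE (a : String) (p : Pol) : Expr := .app (.const .recv) (.ep a p)
def openE (a : String) : Expr := .app (.const .copen) (.chan a)
def futureE (e : Expr) : Expr := .app (.const .future) e

/-- Substitution of an expression for a variable. -/
def subst : Expr → String → Expr → Expr
  | .const k, _, _ => .const k
  | .var y, x, f => if y = x then f else .var y
  | .chan a, _, _ => .chan a
  | .ep a p, _, _ => .ep a p
  | .lam y e, x, f => if y = x then .lam y e else .lam y (e.subst x f)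
  | .app e₁ e₂, x, f => .app (e₁.subst x f) (e₂.subst x f)
  | .split e y z g, x, f =>
      .split (e.subst x f) y z (if y = x ∨ z = x then g else g.subst x f)

/-- Free variables. -/
def fv : Expr → Set String
  | .const _ => ∅
  | .var x => {x}
  | .chan _ => ∅
  | .ep _ _ => ∅
  | .lam x e => e.fv \ {x}
  | .app e f => e.fv ∪ f.fv
  | .split e x y f => e.fv ∪ (f.fv \ {x, y})

/-- Free channels (including the channels of endpoints). -/
def fc : Expr → Set String
  | .const _ => ∅
  | .var _ => ∅
  | .chan a => {a}
  | .ep a _ => {a}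
  | .lam _ e => e.fc
  | .app e f => e.fc ∪ f.fc
  | .split e _ _ f => e.fc ∪ f.fc

/-- Free (polarised) endpoints. -/
def feps : Expr → Set (String × Pol)
  | .const _ => ∅
  | .var _ => ∅
  | .chan _ => ∅
  | .ep a p => {(a, p)}
  | .lam _ e => e.feps
  | .app e f => e.feps ∪ f.feps
  | .split e _ _ f => e.feps ∪ f.feps

end Expr

/-- Evaluation contexts for expressions. -/
inductive ECtx : Type
  | hole : ECtx
  | appL : ECtx → Expr → ECtx
  | splitC : ECtx → String → String → Expr → ECtx
  | openC : ECtx → ECtx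
  | sendC : ECtx → ECtx
  | recvC : ECtx → ECtx
  | bindC : ECtx → ECtx

def ECtx.fill : ECtx → Expr → Expr
  | .hole, e => e
  | .appL E f, e => .app (E.fill e) f
  | .splitC E x y g, e => .split (E.fill e) x y g
  | .openC E, e => .app (.const .copen) (E.fill e)
  | .sendC E, e => .app (.const .send) (E.fill e)
  | .recvC E, e => .app (.const .recv) (E.fill e)
  | .bindC E, e => .app (.const .bind) (E.fill e)

def ECtx.feps : ECtx → Set (String × Pol)
  | .hole => ∅
  | .appL E f => E.feps ∪ f.feps
  | .splitC E _ _ g => E.feps ∪ g.feps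
  | .openC E => E.feps
  | .sendC E => E.feps
  | .recvC E => E.feps
  | .bindC E => E.feps

/-- Call-by-name reduction of expressions. -/
inductive EStep : Expr → Expr → Prop
  | beta {x : String} {e f : Expr} : EStep (.app (.lam x e) f) (e.subst x f)
  | bindRet {e f : Expr} : EStep (Expr.bindE (Expr.retE e) f) (.app f e)
  | splitPair {e₁ e₂ : Expr} {x y : String} {f : Expr} :
      EStep (.split (Expr.pairE e₁ e₂) x y f) ((f.subst x e₁).subst y e₂)
  | ctx {e f : Expr} (E : ECtx) : EStep e f → EStep (E.fill e) (E.fill f)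

/-- Multi-step reduction of expressions. -/
def EMulti : Expr → Expr → Prop := Relation.ReflTransGen EStep

/-- Normal forms. -/
def NormalE (e : Expr) : Prop := ∀ f, ¬ EStep e f

/-- Evaluation contexts for processes (monadic bind chains). -/
inductive PCtx : Type
  | hole : PCtx
  | bindC : PCtx → Expr → PCtx

def PCtx.fill : PCtx → Expr → Expr
  | .hole, e => e
  | .bindC C f, e => Expr.bindE (C.fill e) f

def PCtx.feps : PCtx → Set (String × Pol)
  | .hole => ∅
  | .bindC C f => C.feps ∪ f.feps

end SID
namespace SID

/-! ## Names and environments -/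

inductive Name : Type
  | var : String → Name
  | chan : String → Name
  | ep : String → Pol → Name
  deriving DecidableEq

/-- Bindable names: variables or channels. -/
inductive BName : Type
  | var : String → BName
  | chan : String → BName
  deriving DecidableEq

def BName.toName : BName → Name
  | .var x => .var x
  | .chan a => .chan a

def Expr.ofName : Name → Expr
  | .var x => .var x
  | .chan a => .chan a
  | .ep a p => .ep a p

/-- Number of free occurrences of a name in an expression. -/
def Expr.count (u : Name) : Expr → ℕ
  | .const _ => 0
  | .var x => if u = .var x then 1 else 0
  | .chan a => if u = .chan a then 1 else 0
  | .ep a p => if u = .ep a p then 1 else 0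
  | .lam x e => if u = .var x then 0 else e.count u
  | .app e f => e.count u + f.count u
  | .split e x y f => e.count u + (if u = .var x ∨ u = .var y then 0 else f.count u)

/-- Typing environments. -/
abbrev Env : Type := Name → Option PreTy

namespace Env

def upd (Γ : Env) (u : Name) (t : PreTy) : Env := fun v => if v = u then some t else Γ v

/-- `Γ₁ + Γ₂` is defined: shared assumptions agree and are unlimited. -/
def Compat (Γ₁ Γ₂ : Env) : Prop :=
  ∀ u t₁ t₂, Γ₁ u = some t₁ → Γ₂ u = some t₂ → t₁ = t₂ ∧ PreTy.Un t₁

/-- The combination `Γ₁ + Γ₂` of environments. -/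
def add (Γ₁ Γ₂ : Env) : Env := fun u =>
  match Γ₁ u with
  | some t => some t
  | none => Γ₂ u

end Env

/-- All types in the environment are unlimited. -/
def EnvUn (Γ : Env) : Prop := ∀ u t, Γ u = some t → PreTy.Un t

/-- The environment contains only shared channels. -/
def SharedOnly (Γ : Env) : Prop :=
  ∀ u t, Γ u = some t → (∃ a, u = Name.chan a) ∧ t.label = TyLabel.shared

/-- An environment is balanced if peer endpoints are given dual session types. -/
def Balanced (Γ : Env) : Prop :=
  ∀ a T S, Γ (.ep a .pos) = some T → Γ (.ep a .neg) = some S → T = PreTy.dualS S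

open PreTy in
/-- The type schemas `types(k)` of the constants. -/
inductive ConstTy : Const → PreTy → Prop
  | unit : ConstTy .unit tyUnit
  | ret {t : PreTy} : IsTy t → ConstTy .ret (tyArrow t (tyIO t))
  | copen {T : PreTy} : IsSTy T → ConstTy .copen (tyArrow (tyShared T) (tyIO T))
  | send {t T : PreTy} : IsTy t → IsSTy T →
      ConstTy .send (tyArrow (tyOut t T) (tyLolli t (tyIO T)))
  | recv {t T : PreTy} : IsTy t → IsSTy T →
      ConstTy .recv (tyArrow (tyInp t T) (tyIO (tyProd t T)))
  | future {n : ℕ} {t : PreTy} : IsTy t →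
      ConstTy .future (tyArrow (tyDelayN n (tyIO t)) (tyIO (tyDelayN n t)))
  | bind {t s : PreTy} : IsTy t → IsTy s →
      ConstTy .bind (tyArrow (tyIO t) (tyLolli (tyLolli t (tyIO s)) (tyIO s)))
  | pairLin {t s : PreTy} : IsTy t → IsTy s → Lin t →
      ConstTy .pair (tyArrow t (tyLolli s (tyProd t s)))
  | pairUn {t s : PreTy} : IsTy t → IsTy s → Un t →
      ConstTy .pair (tyArrow t (tyArrow s (tyProd t s)))

open PreTy in
/-- The typing judgement for expressions (Table 3). -/
inductive HasTy : Env → Expr → PreTy → Prop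
  | delayI {Γ : Env} {e : Expr} {t : PreTy} :
      HasTy Γ e t → HasTy Γ e (tyDelay t)
  | const {Γ : Env} {k : Const} {t : PreTy} :
      EnvUn Γ → ConstTy k t → HasTy Γ (.const k) t
  | ax {Γ : Env} {u : Name} {t : PreTy} :
      (∀ v s, v ≠ u → Γ v = some s → Un s) → Γ u = some t → IsTy t →
      HasTy Γ (Expr.ofName u) t
  | arrI {Γ : Env} {x : String} {e : Expr} {t s : PreTy} {n : ℕ} :
      EnvUn Γ → Γ (.var x) = none → IsTy (tyArrow t s) →
      HasTy (Γ.upd (.var x) (tyDelayN n t)) e (tyDelayN n s) →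
      HasTy Γ (.lam x e) (tyDelayN n (tyArrow t s))
  | arrE {Γ₁ Γ₂ : Env} {e₁ e₂ : Expr} {t s : PreTy} {n : ℕ} :
      Env.Compat Γ₁ Γ₂ →
      HasTy Γ₁ e₁ (tyDelayN n (tyArrow t s)) → HasTy Γ₂ e₂ (tyDelayN n t) →
      HasTy (Γ₁.add Γ₂) (.app e₁ e₂) (tyDelayN n s)
  | lolI {Γ : Env} {x : String} {e : Expr} {t s : PreTy} {n : ℕ} :
      Γ (.var x) = none → IsTy (tyLolli t s) →
      HasTy (Γ.upd (.var x) (tyDelayN n t)) e (tyDelayN n s) →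
      HasTy Γ (.lam x e) (tyDelayN n (tyLolli t s))
  | lolE {Γ₁ Γ₂ : Env} {e₁ e₂ : Expr} {t s : PreTy} {n : ℕ} :
      Env.Compat Γ₁ Γ₂ →
      HasTy Γ₁ e₁ (tyDelayN n (tyLolli t s)) → HasTy Γ₂ e₂ (tyDelayN n t) →
      HasTy (Γ₁.add Γ₂) (.app e₁ e₂) (tyDelayN n s)
  | prodE {Γ₁ Γ₂ : Env} {e f : Expr} {x y : String} {t₁ t₂ s : PreTy} {n : ℕ} :
      Env.Compat Γ₁ Γ₂ → x ≠ y → Γ₂ (.var x) = none → Γ₂ (.var y) = none →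
      HasTy Γ₁ e (tyDelayN n (tyProd t₁ t₂)) →
      HasTy ((Γ₂.upd (.var x) (tyDelayN n t₁)).upd (.var y) (tyDelayN n t₂)) f (tyDelayN n s) →
      HasTy (Γ₁.add Γ₂) (.split e x y f) (tyDelayN n s)

end SID
namespace SID

/-! ## Indexed type interpretation -/

/-- Expressions reducing to a normal form. -/
def NSet : Set Expr := {e | ∃ f, EMulti e f ∧ NormalE f}

/-- Expressions reducing to a stuck variable `E[x]`. -/
def NvSet : Set Expr := {e | ∃ (E : ECtx) (x : String), EMulti e (E.fill (.var x))}

/-- Head I/O redexes. -/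
def IOHead (e₀ : Expr) : Prop :=
  (∃ a p f, e₀ = Expr.sendE a p f) ∨ (∃ a p, e₀ = Expr.recvE a p) ∨
  (∃ a, e₀ = Expr.openE a) ∨ (∃ f, e₀ = Expr.futureE f)

/-- Expressions reducing to a pending I/O action `C[e₀]`. -/
def NioSet : Set Expr := {e | ∃ (C : PCtx) (e₀ : Expr), EMulti e (C.fill e₀) ∧ IOHead e₀}

/-- Expressions reducing to an abstraction or to `E[k]`. -/
def RedLamOrK (e : Expr) : Prop :=
  (∃ x f, EMulti e (.lam x f)) ∨ (∃ (E : ECtx) (k : Const), EMulti e (E.fill (.const k)))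

/-- Rank certificates: `RankD t n` witnesses `rank t = n` (Definition 4.7). -/
inductive RankD : PreTy → ℕ → Type
  | base {t : PreTy} :
      t.label = .unit ∨ t.label = .endl ∨ t.label = .inp ∨ t.label = .out ∨ t.label = .shared →
      RankD t 0
  | delay {t : PreTy} : t.label = .delay → RankD t 0
  | io {t : PreTy} {n : ℕ} : t.label = .io → RankD (t.childN 0) n → RankD t (n + 1)
  | prod {t : PreTy} {m n : ℕ} : t.label = .prod →
      RankD (t.childN 0) m → RankD (t.childN 1) n → RankD t (max m n + 1)
  | arrow {t : PreTy} {m n : ℕ} : t.label = .arrow →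
      RankD (t.childN 0) m → RankD (t.childN 1) n → RankD t (max m n + 1)
  | lolli {t : PreTy} {m n : ℕ} : t.label = .lolli →
      RankD (t.childN 0) m → RankD (t.childN 1) n → RankD t (max m n + 1)

/-- Interpretation at rank-0 non-delay types. -/
def interpBase (t : PreTy) : Set Expr :=
  NvSet ∪
    (if t.label = .unit then {e | EMulti e (.const .unit)}
     else if t.label = .shared then {e | ∃ a, EMulti e (.chan a)}
     else {e | ∃ a p, EMulti e (.ep a p)})

/-- Inner recursion of the indexed type interpretation: `prev j` is the
interpretation at all time indices `j < i`. -/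
def interpAux (prev : ℕ → PreTy → Set Expr) (i : ℕ) :
    (t : PreTy) → (n : ℕ) → RankD t n → Set Expr := fun t n d =>
  match d with
  | .base _ => interpBase t
  | .delay _ => if i = 0 then Set.univ else prev (i - 1) (t.childN 0)
  | .io (n := n') _ d' =>
      NvSet ∪ NioSet ∪
        {e | ∃ e', EMulti e (Expr.retE e') ∧ e' ∈ interpAux prev i (t.childN 0) n' d'}
  | .prod (m := m') (n := n') _ d₁ d₂ =>
      NvSet ∪
        {e | ∃ e₁ e₂, EMulti e (Expr.pairE e₁ e₂) ∧
          e₁ ∈ interpAux prev i (t.childN 0) m' d₁ ∧ e₂ ∈ interpAux prev i (t.childN 1) n' d₂}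
  | .arrow (m := m') (n := n') _ d₁ d₂ =>
      NvSet ∪
        {e | RedLamOrK e ∧ ∀ j, j ≤ i → ∀ e',
          e' ∈ (if j = i then interpAux prev i (t.childN 0) m' d₁ else prev j (t.childN 0)) →
          Expr.app e e' ∈
            (if j = i then interpAux prev i (t.childN 1) n' d₂ else prev j (t.childN 1))}
  | .lolli (m := m') (n := n') _ d₁ d₂ =>
      NvSet ∪
        {e | RedLamOrK e ∧ ∀ j, j ≤ i → ∀ e',
          e' ∈ (if j = i then interpAux prev i (t.childN 0) m' d₁ else prev j (t.childN 0)) →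
          Expr.app e e' ∈
            (if j = i then interpAux prev i (t.childN 1) n' d₂ else prev j (t.childN 1))}

/-- The indexed type interpretation `⟦t⟧ᵢ` (Definition 4.8). -/
noncomputable def interp : ℕ → PreTy → Set Expr := fun i =>
  Nat.strongRecOn i fun i ih t =>
    ⋃ (n : ℕ), ⋃ (d : RankD t n),
      interpAux (fun j s => if h : j < i then ih j h s else ∅) i t n d

/-- Simultaneous substitution of expressions for the free variables. -/
def Expr.msubst (δ : String → Expr) : Expr → Expr
  | .const k => .const k
  | .var x => δ x
  | .chan a => .chan a
  | .ep a p => .ep a p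
  | .lam x e => .lam x (e.msubst fun y => if y = x then .var y else δ y)
  | .app e f => .app (e.msubst δ) (f.msubst δ)
  | .split e x y f =>
      .split (e.msubst δ) x y (f.msubst fun z => if z = x ∨ z = y then .var z else δ z)

/-- `δ ⊨ᵢ Γ`. -/
def SatEnv (δ : String → Expr) (i : ℕ) (Γ : Env) : Prop :=
  ∀ x t, Γ (.var x) = some t → δ x ∈ interp i t

end SID
namespace SID

/-! ## Processes -/

inductive Proc : Type
  | nil : Proc
  | thread : String → Expr → Proc
  | server : String → Expr → Proc
  | par : Proc → Proc → Proc
  | nu : BName → Proc → Proc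
  deriving DecidableEq

namespace Proc

/-- Free variables of a process (thread names are free occurrences). -/
def fv : Proc → Set String
  | .nil => ∅
  | .thread x e => {x} ∪ e.fv
  | .server _ e => e.fv
  | .par P Q => P.fv ∪ Q.fv
  | .nu (.var x) P => P.fv \ {x}
  | .nu (.chan _) P => P.fv

/-- Free channels of a process. -/
def fc : Proc → Set String
  | .nil => ∅
  | .thread _ e => e.fc
  | .server a e => {a} ∪ e.fc
  | .par P Q => P.fc ∪ Q.fc
  | .nu (.var _) P => P.fc
  | .nu (.chan a) P => P.fc \ {a}

/-- Substitution of an expression for a variable in a process. -/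
def subst : Proc → String → Expr → Proc
  | .nil, _, _ => .nil
  | .thread y e, x, f => .thread y (e.subst x f)
  | .server a e, x, f => .server a (e.subst x f)
  | .par P Q, x, f => .par (P.subst x f) (Q.subst x f)
  | .nu X P, x, f => if X = .var x then .nu X P else .nu X (P.subst x f)

end Proc

def BName.freeIn : BName → Proc → Prop
  | .var x, P => x ∈ P.fv
  | .chan a, P => a ∈ P.fc

/-- Structural congruence. -/
inductive SC : Proc → Proc → Prop
  | refl (P : Proc) : SC P P
  | symm {P Q : Proc} : SC P Q → SC Q P
  | trans {P Q R : Proc} : SC P Q → SC Q R → SC P R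
  | parComm (P Q : Proc) : SC (.par P Q) (.par Q P)
  | parAssoc (P Q R : Proc) : SC (.par (.par P Q) R) (.par P (.par Q R))
  | parNil (P : Proc) : SC (.par P .nil) P
  | nuNil (X : BName) : SC (.nu X .nil) .nil
  | nuComm (X Y : BName) (P : Proc) : SC (.nu X (.nu Y P)) (.nu Y (.nu X P))
  | nuPar {X : BName} {P Q : Proc} : ¬ X.freeIn Q → SC (.nu X (.par P Q)) (.par (.nu X P) Q)
  | parCong {P P' Q : Proc} : SC P P' → SC (.par P Q) (.par P' Q)
  | nuCong {X : BName} {P P' : Proc} : SC P P' → SC (.nu X P) (.nu X P')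

/-- Reduction of processes (Table 2). -/
inductive PStep : Proc → Proc → Prop
  | popen {a : String} {e : Expr} {x : String} {C : PCtx} {c y : String} :
      c ∉ Proc.fc (.par (.server a e) (.thread x (C.fill (Expr.openE a)))) →
      y ∉ Proc.fv (.par (.server a e) (.thread x (C.fill (Expr.openE a)))) →
      c ≠ a → y ≠ x →
      PStep (.par (.server a e) (.thread x (C.fill (Expr.openE a))))
            (.par (.server a e)
              (.nu (.chan c) (.nu (.var y)
                (.par (.thread x (C.fill (Expr.retE (.ep c .pos))))
                      (.thread y (.app e (.ep c .neg)))))))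
  | comm {x : String} {C : PCtx} {a : String} {p : Pol} {e : Expr} {y : String} {C' : PCtx} :
      PStep (.par (.thread x (C.fill (Expr.sendE a p e)))
                  (.thread y (C'.fill (Expr.recvE a p.dual))))
            (.par (.thread x (C.fill (Expr.retE (.ep a p))))
                  (.thread y (C'.fill (Expr.retE (Expr.pairE e (.ep a p.dual))))))
  | future {x : String} {C : PCtx} {e : Expr} {y : String} :
      y ∉ Proc.fv (.thread x (C.fill (Expr.futureE e))) →
      PStep (.thread x (C.fill (Expr.futureE e)))
            (.nu (.var y) (.par (.thread x (C.fill (Expr.retE (.var y)))) (.thread y e)))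
  | ret {x : String} {e : Expr} {P : Proc} :
      PStep (.nu (.var x) (.par (.thread x (Expr.retE e)) P)) (P.subst x e)
  | thread {x : String} {e f : Expr} : EStep e f → PStep (.thread x e) (.thread x f)
  | nu {X : BName} {P Q : Proc} : PStep P Q → PStep (.nu X P) (.nu X Q)
  | par {P Q R : Proc} : PStep P Q → PStep (.par P R) (.par Q R)
  | cong {P P' Q Q' : Proc} : SC P P' → PStep P' Q' → SC Q' Q → PStep P Q

/-- The reduction `→⁻`, i.e. reduction without the rules r-open and r-future. -/
inductive PStepM : Proc → Proc → Prop
  | comm {x : String} {C : PCtx} {a : String} {p : Pol} {e : Expr} {y : String} {C' : PCtx} :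
      PStepM (.par (.thread x (C.fill (Expr.sendE a p e)))
                  (.thread y (C'.fill (Expr.recvE a p.dual))))
            (.par (.thread x (C.fill (Expr.retE (.ep a p))))
                  (.thread y (C'.fill (Expr.retE (Expr.pairE e (.ep a p.dual))))))
  | ret {x : String} {e : Expr} {P : Proc} :
      PStepM (.nu (.var x) (.par (.thread x (Expr.retE e)) P)) (P.subst x e)
  | thread {x : String} {e f : Expr} : EStep e f → PStepM (.thread x e) (.thread x f)
  | nu {X : BName} {P Q : Proc} : PStepM P Q → PStepM (.nu X P) (.nu X Q)
  | par {P Q R : Proc} : PStepM P Q → PStepM (.par P R) (.par Q R)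
  | cong {P P' Q Q' : Proc} : SC P P' → PStepM P' Q' → SC Q' Q → PStepM P Q

/-! ## Process typing -/

/-- Resource environments. -/
abbrev Res : Type := BName → Option PreTy

namespace Res

def single (X : BName) (t : PreTy) : Res := fun Y => if Y = X then some t else none

def disj (Δ₁ Δ₂ : Res) : Prop := ∀ X, Δ₁ X = none ∨ Δ₂ X = none

def add (Δ₁ Δ₂ : Res) : Res := fun X =>
  match Δ₁ X with
  | some t => some t
  | none => Δ₂ X

def upd (Δ : Res) (X : BName) (t : PreTy) : Res := fun Y => if Y = X then some t else Δ Y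

end Res

open PreTy in
/-- The typing judgement for processes (Table 4). -/
inductive ProcTy : Env → Proc → Res → Prop
  | thread {Γ : Env} {x : String} {e : Expr} {t : PreTy} {n : ℕ} :
      Γ (.var x) = none →
      HasTy Γ e (tyDelayN n (tyIO t)) →
      ProcTy Γ (.thread x e) (Res.single (.var x) (tyDelayN n t))
  | server {Γ : Env} {a : String} {e : Expr} {T t : PreTy} :
      SharedOnly Γ → Un t → IsSTy T →
      (Γ (.chan a) = none ∨ Γ (.chan a) = some (tyShared T)) →
      HasTy Γ e (tyArrow (dualS T) (tyIO t)) →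
      ProcTy (Γ.upd (.chan a) (tyShared T)) (.server a e) (Res.single (.chan a) (tyShared T))
  | par {Γ₁ Γ₂ : Env} {P₁ P₂ : Proc} {Δ₁ Δ₂ : Res} :
      Env.Compat Γ₁ Γ₂ → Res.disj Δ₁ Δ₂ →
      ProcTy Γ₁ P₁ Δ₁ → ProcTy Γ₂ P₂ Δ₂ →
      ProcTy (Γ₁.add Γ₂) (.par P₁ P₂) (Res.add Δ₁ Δ₂)
  | session {Γ : Env} {a : String} {T : PreTy} {P : Proc} {Δ : Res} {p : Pol} :
      Γ (.ep a .pos) = none → Γ (.ep a .neg) = none → IsSTy T →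
      ProcTy ((Γ.upd (.ep a p) T).upd (.ep a p.dual) (dualS T)) P Δ →
      ProcTy Γ (.nu (.chan a) P) Δ
  | new {Γ : Env} {X : BName} {t : PreTy} {P : Proc} {Δ : Res} :
      Γ X.toName = none → Δ X = none →
      ProcTy (Γ.upd X.toName t) P (Δ.upd X t) →
      ProcTy Γ (.nu X P) Δ

/-- A process is typeable. -/
def Typeable (P : Proc) : Prop := ∃ Γ Δ, ProcTy Γ P Δ

/-! ## Initial, reachable and final processes -/

inductive ThreadOnly : Proc → Prop
  | nil : ThreadOnly .nil
  | thread (x : String) (e : Expr) : ThreadOnly (.thread x e)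
  | par {P Q : Proc} : ThreadOnly P → ThreadOnly Q → ThreadOnly (.par P Q)

inductive ServerOnly : Proc → Prop
  | nil : ServerOnly .nil
  | server (a : String) (e : Expr) : ServerOnly (.server a e)
  | par {P Q : Proc} : ServerOnly P → ServerOnly Q → ServerOnly (.par P Q)

def nuList (Xs : List BName) (P : Proc) : Proc := Xs.foldr .nu P

def servList : List (String × Expr) → Proc
  | [] => .nil
  | (a, e) :: l => .par (.server a e) (servList l)

def Proc.Closed (P : Proc) : Prop := P.fv = ∅ ∧ P.fc = ∅

/-- Initial processes: one main thread together with the needed servers. -/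
def Initial (P : Proc) : Prop :=
  P.Closed ∧ Typeable P ∧
  ∃ (x : String) (e : Expr) (l : List (String × Expr)),
    SC P (.nu (.var x) (nuList (l.map fun ae => BName.chan ae.1)
      (.par (.thread x e) (servList l))))

/-- Reachable processes. -/
def Reachable (P : Proc) : Prop :=
  ∃ P₀, Initial P₀ ∧ Relation.ReflTransGen PStep P₀ P

/-- Final processes: only servers are left. -/
def Final (P : Proc) : Prop :=
  ∃ l : List (String × Expr),
    SC P (nuList (l.map fun ae => BName.chan ae.1) (servList l))

end SID
namespace SID

/-! ## Well-polarisation -/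

/-- Polarised names. -/
abbrev PName : Type := BName × Pol

/-- Polarised names of an expression: free endpoints plus `x⁺` for free variables. -/
def Expr.pnames (e : Expr) : Set PName :=
  {pn | (∃ a p, pn = (BName.chan a, p) ∧ (a, p) ∈ e.feps) ∨
        (∃ x, pn = (BName.var x, Pol.pos) ∧ x ∈ e.fv)}

/-- Polarised names of a process. -/
def Proc.pnames : Proc → Set PName
  | .nil => ∅
  | .thread x e => insert (BName.var x, Pol.neg) e.pnames
  | .server _ e => e.pnames
  | .par P Q => P.pnames ∪ Q.pnames
  | .nu X P => P.pnames \ {pn | pn.1 = X}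

/-- Independence of sets of polarised names. -/
def Indep (A B : Set PName) : Prop :=
  ∀ (X : BName) (p q : Pol), (X, p) ∈ A → (X, q) ∈ B → p = q

/-- The least well-polarisation predicate on thread-only processes (Definition 5.4). -/
inductive WP : Proc → Prop
  | nil : WP .nil
  | thread {x : String} {e : Expr} :
      (BName.var x, Pol.pos) ∉ e.pnames → Indep e.pnames e.pnames →
      WP (.thread x e)
  | par {P Q : Proc} (X : BName) (p : Pol) :
      WP P → WP Q →
      Indep (P.pnames \ {(X, p)}) (Q.pnames \ {(X, p.dual)}) →
      WP (.par P Q)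

/-- `Decomp P Q R`: `P ≡ (νX₁…Xₙ)(Q|R)` with `Q = threads(P)` and `R = servers(P)`. -/
def Decomp (P Q R : Proc) : Prop :=
  ∃ Xs : List BName, SC P (nuList Xs (.par Q R)) ∧ ThreadOnly Q ∧ ServerOnly R

/-- A process is well-polarised if `⊨ Q` for some `Q ≡ threads(P)`. -/
def WellPolarised (P : Proc) : Prop :=
  ∃ Q R, Decomp P Q R ∧ WP Q

/-- The subprocess relation `P ⊆ Q` (Definition 5.6). -/
inductive SubP : Proc → Proc → Prop
  | nil : SubP .nil .nil
  | thread (x : String) (e : Expr) : SubP (.thread x e) (.thread x e)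
  | parL {P' P Q : Proc} : SubP P' P → SubP P' (.par P Q)
  | parR {Q' P Q : Proc} : SubP Q' Q → SubP Q' (.par P Q)
  | parBoth {P' Q' P Q : Proc} : SubP P' P → SubP Q' Q → SubP (.par P' Q') (.par P Q)

/-! ## Occurrence counting in processes -/

/-- Free occurrences of a name in the bodies of the threads of a process. -/
def Proc.countThreadBody (u : Name) : Proc → ℕ
  | .nil => 0
  | .thread _ e => e.count u
  | .server _ _ => 0
  | .par P Q => P.countThreadBody u + Q.countThreadBody u
  | .nu X P => if X.toName = u then 0 else P.countThreadBody u

/-- Free occurrences of a name in the bodies of the servers of a process. -/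
def Proc.countServerBody (u : Name) : Proc → ℕ
  | .nil => 0
  | .thread _ _ => 0
  | .server _ e => e.count u
  | .par P Q => P.countServerBody u + Q.countServerBody u
  | .nu X P => if X.toName = u then 0 else P.countServerBody u

/-- Occurrences of a name as the name of a thread of a process. -/
def Proc.countThreadName (u : Name) : Proc → ℕ
  | .nil => 0
  | .thread x _ => if Name.var x = u then 1 else 0
  | .server _ _ => 0
  | .par P Q => P.countThreadName u + Q.countThreadName u
  | .nu X P => if X.toName = u then 0 else P.countThreadName u

/-! ## Precedence between threads -/

/-- The endpoint `a^p` is ready in `e`. -/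
def ReadyIn (a : String) (p : Pol) (e : Expr) : Prop :=
  (∃ (C : PCtx) (f : Expr), e = C.fill (Expr.sendE a p f)) ∨
  (∃ C : PCtx, e = C.fill (Expr.recvE a p))

/-- The endpoint `a^p` is blocked in `e`. -/
def BlockedIn (a : String) (p : Pol) (e : Expr) : Prop :=
  (∃ (C : PCtx) (b : String) (q : Pol) (f : Expr),
      e = C.fill (Expr.sendE b q f) ∧ a ≠ b ∧ ((a, p) ∈ C.feps ∨ (a, p) ∈ f.feps)) ∨
  (∃ (C : PCtx) (b : String) (q : Pol),
      e = C.fill (Expr.recvE b q) ∧ a ≠ b ∧ (a, p) ∈ C.feps) ∨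
  (∃ (E : ECtx) (x : String), e = E.fill (.var x) ∧ (a, p) ∈ E.feps)

/-- The expression `e` precedes the expression `f`. -/
def EPrec (e f : Expr) : Prop :=
  ∃ a p, ReadyIn a p f ∧ BlockedIn a p.dual e

/-- The thread `⟨x⟩e` precedes the thread `⟨y⟩f`. -/
def TPrec (xe yf : String × Expr) : Prop :=
  EPrec xe.2 yf.2 ∨ ∃ E : ECtx, yf.2 = E.fill (.var xe.1)

end SID

/-!
Invert the typing of the bind chain `C`: a judgement `bind g f : •ᵐ IO s` can only come from
`g : •^q IO s'` with `q ≤ m`, because an application carries the delays of its function part plus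
those added by rule •I. At the hole, `send` and `recv` are applied to `a^p` at a delay-free session
type under `•^q`, while the assumption `a^p : •ⁿT` can only be delayed further, so `n ≤ q ≤ m`.
-/

namespace SID

namespace PreTy

@[simp] theorem label_tyUnit : tyUnit.label = .unit := rfl
@[simp] theorem label_tyDelay (t : PreTy) : (tyDelay t).label = .delay := rfl
@[simp] theorem label_tyIO (t : PreTy) : (tyIO t).label = .io := rfl
@[simp] theorem label_tyInp (t T : PreTy) : (tyInp t T).label = .inp := rfl
@[simp] theorem label_tyOut (t T : PreTy) : (tyOut t T).label = .out := rfl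
@[simp] theorem label_tyArrow (t s : PreTy) : (tyArrow t s).label = .arrow := rfl
@[simp] theorem label_tyLolli (t s : PreTy) : (tyLolli t s).label = .lolli := rfl

@[simp] theorem childN_tyUnit (k : ℕ) : tyUnit.childN k = tyUnit := dif_neg (Nat.not_lt_zero k)
@[simp] theorem childN_tyDelay (t : PreTy) : (tyDelay t).childN 0 = t := dif_pos Nat.zero_lt_one
@[simp] theorem childN_zero_tyArrow (t s : PreTy) : (tyArrow t s).childN 0 = t := dif_pos two_pos
@[simp] theorem childN_one_tyArrow (t s : PreTy) : (tyArrow t s).childN 1 = s :=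
  dif_pos one_lt_two
@[simp] theorem childN_zero_tyLolli (t s : PreTy) : (tyLolli t s).childN 0 = t := dif_pos two_pos
@[simp] theorem childN_one_tyLolli (t s : PreTy) : (tyLolli t s).childN 1 = s :=
  dif_pos one_lt_two

theorem tyDelay_injective : Function.Injective tyDelay := fun t s h => by
  simpa using congrArg (childN · 0) h

@[simp] theorem tyDelayN_zero (t : PreTy) : tyDelayN 0 t = t := rfl

theorem tyDelayN_succ (n : ℕ) (t : PreTy) : tyDelayN (n + 1) t = tyDelay (tyDelayN n t) :=
  Function.iterate_succ_apply' _ n t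

theorem tyDelayN_tyDelayN (a b : ℕ) (t : PreTy) :
    tyDelayN a (tyDelayN b t) = tyDelayN (a + b) t :=
  (Function.iterate_add_apply _ a b t).symm

theorem le_of_tyDelayN_eq {j w : ℕ} {s u : PreTy} (hs : s.label ≠ .delay)
    (h : tyDelayN j s = tyDelayN w u) : w ≤ j := by
  induction w generalizing j with
  | zero => exact j.zero_le
  | succ w ih =>
    cases j with
    | zero => exact (hs (by simpa [tyDelayN_succ] using congrArg label h)).elim
    | succ j => simpa using ih (tyDelay_injective (by simpa only [tyDelayN_succ] using h))

theorem tyDelayN_eq_tyDelayN {j w : ℕ} {s u : PreTy} (hs : s.label ≠ .delay)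
    (hu : u.label ≠ .delay) (h : tyDelayN j s = tyDelayN w u) : j = w ∧ s = u := by
  obtain rfl : j = w := le_antisymm (le_of_tyDelayN_eq hu h.symm) (le_of_tyDelayN_eq hs h)
  exact ⟨rfl, (tyDelay_injective.iterate j).eq_iff.mp h⟩

end PreTy

open PreTy

namespace Env

def Subenv (Δ Γ : Env) : Prop := ∀ u s, Δ u = some s → Γ u = some s

theorem Subenv.refl (Γ : Env) : Γ.Subenv Γ := fun _ _ h => h

theorem Subenv.trans {Γ₁ Γ₂ Γ₃ : Env} (h₁₂ : Γ₁.Subenv Γ₂) (h₂₃ : Γ₂.Subenv Γ₃) :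
    Γ₁.Subenv Γ₃ :=
  fun u s h => h₂₃ u s (h₁₂ u s h)

theorem subenv_add_left (Γ₁ Γ₂ : Env) : Γ₁.Subenv (Γ₁.add Γ₂) := fun u s h => by
  simp [add, h]

theorem subenv_add_right {Γ₁ Γ₂ : Env} (hc : Compat Γ₁ Γ₂) : Γ₂.Subenv (Γ₁.add Γ₂) := by
  intro u s h
  cases h₁ : Γ₁ u with
  | none => simp [add, h₁, h]
  | some s₁ => simp [add, h₁, (hc u s₁ s h₁ h).1]

end Env

namespace ConstTy

theorem label_ne_delay {k : Const} {F : PreTy} (h : ConstTy k F) : F.label ≠ .delay := by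
  cases h <;> simp

theorem label_childN_one_ne_delay {k : Const} {F : PreTy} (h : ConstTy k F) :
    (F.childN 1).label ≠ .delay := by
  cases h <;> simp

theorem send_inv {F : PreTy} (h : ConstTy .send F) :
    ∃ t T, F = tyArrow (tyOut t T) (tyLolli t (tyIO T)) := by
  cases h; exact ⟨_, _, rfl⟩

theorem recv_inv {F : PreTy} (h : ConstTy .recv F) :
    ∃ t T, F = tyArrow (tyInp t T) (tyIO (tyProd t T)) := by
  cases h; exact ⟨_, _, rfl⟩

theorem bind_inv {F : PreTy} (h : ConstTy .bind F) :
    ∃ t s, F = tyArrow (tyIO t) (tyLolli (tyLolli t (tyIO s)) (tyIO s)) := by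
  cases h; exact ⟨_, _, rfl⟩

end ConstTy

namespace HasTy

variable {Γ : Env} {τ : PreTy}

theorem const_inv {k : Const} (h : HasTy Γ (.const k) τ) :
    ∃ r F, τ = tyDelayN r F ∧ ConstTy k F := by
  generalize he : Expr.const k = e at h
  induction h with
  | delayI _ ih =>
    obtain ⟨r, F, rfl, hk⟩ := ih he
    exact ⟨r + 1, F, (tyDelayN_succ r F).symm, hk⟩
  | const _ hk => cases he; exact ⟨0, _, rfl, hk⟩
  | @ax _ u => cases u <;> cases he
  | _ => cases he

theorem ep_inv {a : String} {p : Pol} (h : HasTy Γ (.ep a p) τ) :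
    ∃ r s, τ = tyDelayN r s ∧ Γ (.ep a p) = some s := by
  generalize he : Expr.ep a p = e at h
  induction h with
  | delayI _ ih =>
    obtain ⟨r, s, rfl, hs⟩ := ih he
    exact ⟨r + 1, s, (tyDelayN_succ r s).symm, hs⟩
  | @ax _ u _ _ hu => cases u <;> cases he; exact ⟨0, _, rfl, hu⟩
  | _ => cases he

theorem app_inv {e₁ e₂ : Expr} (h : HasTy Γ (.app e₁ e₂) τ) :
    ∃ (Γ₁ Γ₂ : Env) (j r : ℕ) (F : PreTy), Γ₁.Subenv Γ ∧ Γ₂.Subenv Γ ∧ F.label ≠ .delay ∧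
      HasTy Γ₁ e₁ (tyDelayN j F) ∧ HasTy Γ₂ e₂ (tyDelayN j (F.childN 0)) ∧
      τ = tyDelayN (r + j) (F.childN 1) := by
  generalize he : Expr.app e₁ e₂ = e at h
  induction h with
  | delayI _ ih =>
    obtain ⟨Γ₁, Γ₂, j, r, F, h₁, h₂, hF, he₁, he₂, rfl⟩ := ih he
    exact ⟨Γ₁, Γ₂, j, r + 1, F, h₁, h₂, hF, he₁, he₂, by rw [← tyDelayN_succ, add_right_comm]⟩
  | arrE hc he₁ he₂ =>
    cases he
    exact ⟨_, _, _, 0, _, Env.subenv_add_left _ _, Env.subenv_add_right hc, by simp,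
      he₁, by simpa using he₂, by simp⟩
  | lolE hc he₁ he₂ =>
    cases he
    exact ⟨_, _, _, 0, _, Env.subenv_add_left _ _, Env.subenv_add_right hc, by simp,
      he₁, by simpa using he₂, by simp⟩
  | @ax _ u => cases u <;> cases he
  | _ => cases he

theorem constApp_inv {k : Const} {e : Expr} (h : HasTy Γ (.app (.const k) e) τ) :
    ∃ (Δ : Env) (q r : ℕ) (F : PreTy), Δ.Subenv Γ ∧ ConstTy k F ∧
      HasTy Δ e (tyDelayN q (F.childN 0)) ∧ τ = tyDelayN (r + q) (F.childN 1) := by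
  obtain ⟨_, Δ, j, r, G, -, hΔ, hG, hk, he, rfl⟩ := h.app_inv
  obtain ⟨j', F, hGF, hF⟩ := hk.const_inv
  obtain ⟨rfl, rfl⟩ := tyDelayN_eq_tyDelayN hG hF.label_ne_delay hGF
  exact ⟨Δ, j, r, G, hΔ, hF, he, rfl⟩

theorem constApp₂_inv {k : Const} {e₁ e₂ : Expr}
    (h : HasTy Γ (.app (.app (.const k) e₁) e₂) τ) :
    ∃ (Δ : Env) (q r : ℕ) (F : PreTy), Δ.Subenv Γ ∧ ConstTy k F ∧
      HasTy Δ e₁ (tyDelayN q (F.childN 0)) ∧ τ = tyDelayN (r + q) ((F.childN 1).childN 1) := by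
  obtain ⟨Γ₁, _, j, r, G, hΓ₁, -, hG, hk, -, rfl⟩ := h.app_inv
  obtain ⟨Δ, q, r', F, hΔ, hF, he₁, hGF⟩ := hk.constApp_inv
  obtain ⟨rfl, rfl⟩ := tyDelayN_eq_tyDelayN hG hF.label_childN_one_ne_delay hGF
  exact ⟨Δ, q, r + r', F, hΔ.trans hΓ₁, hF, he₁, by rw [add_assoc]⟩

theorem bindE_inv {g f : Expr} {m : ℕ} {t : PreTy}
    (h : HasTy Γ (Expr.bindE g f) (tyDelayN m (tyIO t))) :
    ∃ (Δ : Env) (q : ℕ) (t' : PreTy), Δ.Subenv Γ ∧ HasTy Δ g (tyDelayN q (tyIO t')) ∧ q ≤ m := by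
  obtain ⟨Δ, q, r, F, hΔ, hF, hg, hτ⟩ := h.constApp₂_inv
  obtain ⟨t', s, rfl⟩ := hF.bind_inv
  simp only [childN_zero_tyArrow, childN_one_tyArrow, childN_one_tyLolli] at hg hτ
  obtain ⟨hm, -⟩ := tyDelayN_eq_tyDelayN (by simp) (by simp) hτ
  exact ⟨Δ, q, t', hΔ, hg, by omega⟩

theorem pctx_fill_inv (C : PCtx) {e : Expr} {m : ℕ} {t : PreTy}
    (h : HasTy Γ (C.fill e) (tyDelayN m (tyIO t))) :
    ∃ (Δ : Env) (q : ℕ) (t' : PreTy), Δ.Subenv Γ ∧ HasTy Δ e (tyDelayN q (tyIO t')) ∧ q ≤ m := by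
  induction C generalizing Γ m t with
  | hole => exact ⟨Γ, m, t, Env.Subenv.refl Γ, h, le_rfl⟩
  | bindC C f ih =>
    obtain ⟨Δ₁, q₁, t₁, hΔ₁, h₁, hq₁⟩ := bindE_inv h
    obtain ⟨Δ₂, q₂, t₂, hΔ₂, h₂, hq₂⟩ := ih h₁
    exact ⟨Δ₂, q₂, t₂, hΔ₂.trans hΔ₁, h₂, hq₂.trans hq₁⟩

section Endpoint

variable {Δ : Env} {a : String} {p : Pol} {n : ℕ} {T : PreTy}

theorem delay_le_of_ep {q : ℕ} {A : PreTy} (h : HasTy Δ (.ep a p) (tyDelayN q A))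
    (hA : A.label ≠ .delay) (hΔ : Δ.Subenv Γ) (hΓ : Γ (.ep a p) = some (tyDelayN n T)) :
    n ≤ q := by
  obtain ⟨r, s, hq, hs⟩ := h.ep_inv
  obtain rfl : s = tyDelayN n T := Option.some_injective _ ((hΔ _ _ hs).symm.trans hΓ)
  rw [tyDelayN_tyDelayN] at hq
  exact le_of_add_le_right (le_of_tyDelayN_eq hA hq)

theorem delay_le_of_sendE {e : Expr} {m : ℕ} {t : PreTy}
    (h : HasTy Δ (Expr.sendE a p e) (tyDelayN m (tyIO t))) (hΔ : Δ.Subenv Γ)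
    (hΓ : Γ (.ep a p) = some (tyDelayN n T)) : n ≤ m := by
  obtain ⟨Δ', q, r, F, hΔ', hF, hep, hτ⟩ := h.constApp₂_inv
  obtain ⟨t₀, T₀, rfl⟩ := hF.send_inv
  simp only [childN_zero_tyArrow, childN_one_tyArrow, childN_one_tyLolli] at hep hτ
  have hnq := hep.delay_le_of_ep (by simp) (hΔ'.trans hΔ) hΓ
  obtain ⟨hm, -⟩ := tyDelayN_eq_tyDelayN (by simp) (by simp) hτ
  omega

theorem delay_le_of_recvE {m : ℕ} {t : PreTy}
    (h : HasTy Δ (Expr.recvE a p) (tyDelayN m (tyIO t))) (hΔ : Δ.Subenv Γ)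
    (hΓ : Γ (.ep a p) = some (tyDelayN n T)) : n ≤ m := by
  obtain ⟨Δ', q, r, F, hΔ', hF, hep, hτ⟩ := h.constApp_inv
  obtain ⟨t₀, T₀, rfl⟩ := hF.recv_inv
  simp only [childN_zero_tyArrow, childN_one_tyArrow] at hep hτ
  have hnq := hep.delay_le_of_ep (by simp) (hΔ'.trans hΔ) hΓ
  obtain ⟨hm, -⟩ := tyDelayN_eq_tyDelayN (by simp) (by simp) hτ
  omega

end Endpoint

end HasTy

theorem delay_of_communications_general {Γ : Env} {a : String} {p : Pol} {T : PreTy} {C : PCtx}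
    {t : PreTy} {n m : ℕ}
    (h : (∃ e, HasTy (Γ.upd (.ep a p) (PreTy.tyDelayN n T))
            (C.fill (Expr.sendE a p e)) (PreTy.tyDelayN m (PreTy.tyIO t))) ∨
         HasTy (Γ.upd (.ep a p) (PreTy.tyDelayN n T))
            (C.fill (Expr.recvE a p)) (PreTy.tyDelayN m (PreTy.tyIO t))) :
    n ≤ m := by
  have hΓ : Γ.upd (.ep a p) (tyDelayN n T) (.ep a p) = some (tyDelayN n T) := if_pos rfl
  rcases h with ⟨e, h⟩ | h
  · obtain ⟨Δ, q, t', hΔ, hq, hqm⟩ := h.pctx_fill_inv C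
    exact (hq.delay_le_of_sendE hΔ hΓ).trans hqm
  · obtain ⟨Δ, q, t', hΔ, hq, hqm⟩ := h.pctx_fill_inv C
    exact (hq.delay_le_of_recvE hΔ hΓ).trans hqm

/-- **Lemma 5.16.** If `Γ, a^p : •ⁿT ⊢ C[send a^p e] : •ᵐ(IO t)` or
`Γ, a^p : •ⁿT ⊢ C[recv a^p] : •ᵐ(IO t)`, then `n ≤ m`. -/
theorem delay_of_communications {Γ : Env} {a : String} {p : Pol} {T : PreTy} {C : PCtx}
    {t : PreTy} {n m : ℕ}
    (ha : Γ (.ep a p) = none) (hT : PreTy.IsSTy T)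
    (h : (∃ e, HasTy (Γ.upd (.ep a p) (PreTy.tyDelayN n T))
            (C.fill (Expr.sendE a p e)) (PreTy.tyDelayN m (PreTy.tyIO t))) ∨
         HasTy (Γ.upd (.ep a p) (PreTy.tyDelayN n T))
            (C.fill (Expr.recvE a p)) (PreTy.tyDelayN m (PreTy.tyIO t))) :
    n ≤ m :=
  delay_of_communications_general h

end SID
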